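/- For every x, y ∈ Γ for which x + y is defined, (x + y) ∸̃ y ≤ x, where x ∸̃ y := sup{ x ∸ q° | y < q° ≤ x } is the second partial subtraction; moreover (x+y) ∸̃ y = ι⁻(γ(x)). -/

import Mathlib

open scoped Classical

/-- The carrier of the "doubled unit interval" `Γ`: pairs `(r, b)` ordered
lexicographically, where `b = true` represents an exact value `r°`
(which must be rational) and `b = false` represents an approximation `r⁻`
(which must satisfy `r > 0`). -/
def GammaCarrier : Set (Lex (ℝ × Bool)) :=
  {p | 0 ≤ (ofLex p).1 ∧ (ofLex p).1 ≤ 1 ∧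
    ((ofLex p).2 = true → ∃ q : ℚ, (q : ℝ) = (ofLex p).1) ∧
    ((ofLex p).2 = false → 0 < (ofLex p).1)}

/-- The doubled unit interval `Γ`, with the (total) order inherited from the
lexicographic product: `r* < s*` iff `r < s`, and `q⁻ < q°` immediately. -/
abbrev Gamma : Type := {p : Lex (ℝ × Bool) // p ∈ GammaCarrier}

theorem mem_gammaCarrier {a : ℝ} {b : Bool} (h1 : 0 ≤ a) (h2 : a ≤ 1)
    (h3 : b = true → ∃ q : ℚ, (q : ℝ) = a) (h4 : b = false → 0 < a) :
    toLex (a, b) ∈ GammaCarrier := ⟨h1, h2, h3, h4⟩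

/-- The underlying real number of an element of `Γ` (the map `γ`). -/
def γmap (x : Gamma) : ℝ := (ofLex x.1).1

/-- An element of `Γ` is exact iff it is of `°`-type. -/
def gexact (x : Gamma) : Prop := (ofLex x.1).2 = true

theorem gmem (x : Gamma) : 0 ≤ (ofLex x.1).1 ∧ (ofLex x.1).1 ≤ 1 ∧
    ((ofLex x.1).2 = true → ∃ q : ℚ, (q : ℝ) = (ofLex x.1).1) ∧
    ((ofLex x.1).2 = false → 0 < (ofLex x.1).1) := x.2

/-- Smart constructor for `Γ`: clamps `r` into `[0,1]`, and produces the exact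
value `r°` if `e = true` and `r` is rational (or `r = 0`), and `r⁻` otherwise. -/
noncomputable def mk' (r : ℝ) (e : Bool) : Gamma :=
  if h : (e = true ∧ ∃ q : ℚ, (q : ℝ) = max 0 (min 1 r)) ∨ max 0 (min 1 r) = 0 then
    ⟨toLex (max 0 (min 1 r), true),
      mem_gammaCarrier (le_max_left 0 _) (max_le zero_le_one (min_le_left 1 r))
        (fun _ => h.elim (fun h' => h'.2) (fun h0 => ⟨0, by rw [h0]; norm_num⟩))
        (fun hc => absurd hc (by simp))⟩
  else
    ⟨toLex (max 0 (min 1 r), false),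
      mem_gammaCarrier (le_max_left 0 _) (max_le zero_le_one (min_le_left 1 r))
        (fun hc => absurd hc (by simp))
        (fun _ => lt_of_le_of_ne (le_max_left 0 _) (fun h0 => h (Or.inr h0.symm)))⟩

/-- `0°`, the bottom element of `Γ`. -/
noncomputable def gzero : Gamma := mk' 0 true
/-- `1°`, the top element of `Γ`. -/
noncomputable def gone : Gamma := mk' 1 true
/-- The section `ι° : [0,1] → Γ`, `r ↦ r°` for rational `r` and `r ↦ r⁻` otherwise. -/
noncomputable def icircR (r : ℝ) : Gamma := mk' r true
/-- The section `ι⁻ : [0,1] → Γ`, `0 ↦ 0°` and `r ↦ r⁻` for `r > 0`. -/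
noncomputable def iminusR (r : ℝ) : Gamma := mk' r false
/-- The exact value `q°` of a rational `q ∈ [0,1]`. -/
noncomputable def gq (q : ℚ) : Gamma := mk' (q : ℝ) true
/-- `ι°` as a map on the unit interval. -/
noncomputable def icirc (r : Set.Icc (0:ℝ) 1) : Gamma := icircR r.1
/-- `ι⁻` as a map on the unit interval. -/
noncomputable def iminusI (r : Set.Icc (0:ℝ) 1) : Gamma := iminusR r.1
/-- `γ : Γ → [0,1]` as a map into the unit interval. -/
noncomputable def gmapI (x : Gamma) : Set.Icc (0:ℝ) 1 := ⟨γmap x, (gmem x).1, (gmem x).2.1⟩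

/-- The partial subtraction `∸` on `Γ` (meaningful when `y ≤ x`):
`r° ∸ s° = (r−s)°`, `r⁻ ∸ s° = (r−s)⁻`, and `r* ∸ s⁻ = (r−s)°` if `r−s ∈ ℚ`,
`(r−s)⁻` otherwise. -/
noncomputable def gsub (x y : Gamma) : Gamma :=
  mk' (γmap x - γmap y)
    (if (gexact x ∧ gexact y) ∨ (¬ gexact y ∧ ∃ q : ℚ, (q : ℝ) = γmap x - γmap y)
      then true else false)

/-- The second partial subtraction `∸̃` on `Γ` (meaningful when `y ≤ x`):
`x ∸̃ x = 0°` and, for `y < x`, `r° ∸̃ s° = r⁻ ∸̃ s⁻ = r⁻ ∸̃ s° = (r−s)⁻` and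
`r° ∸̃ s⁻ = (r−s)°` if `r−s ∈ ℚ`, `(r−s)⁻` otherwise. -/
noncomputable def gsubt (x y : Gamma) : Gamma :=
  mk' (γmap x - γmap y)
    (if gexact x ∧ ¬ gexact y ∧ ∃ q : ℚ, (q : ℝ) = γmap x - γmap y then true else false)

/-- The partial addition `+` on `Γ` (meaningful when `x ≤ 1° ∸ y`):
`r° + s° = (r+s)°` and any sum involving a `⁻`-argument is of `⁻`-type. -/
noncomputable def gadd (x y : Gamma) : Gamma :=
  mk' (γmap x + γmap y) (if gexact x ∧ gexact y then true else false)

/-- A `Γ`-valued (finitely additive, probability) measure on a bounded lattice. -/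
def IsGMeasure {D : Type*} [Lattice D] [BoundedOrder D] (μ : D → Gamma) : Prop :=
  Monotone μ ∧ μ ⊥ = gzero ∧ μ ⊤ = gone ∧
  ∀ a b : D, gsubt (μ a) (μ (a ⊓ b)) ≤ gsub (μ (a ⊔ b)) (μ b) ∧
    gsubt (μ (a ⊔ b)) (μ b) ≤ gsub (μ a) (μ (a ⊓ b))

/-! `ι⁻(γ x)` is the least element of `Γ` lying over `γ x`. Each `(x + y) ∸ q°` with `y < q°`
lies over `γ x + γ y - q ≤ γ x`, and lies over `γ x` only when `q = γ y`; then `y`, hence `x + y`,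
is of `⁻`-type and the difference is exactly `ι⁻(γ x)`. Rationals `q` just above `γ y` push the
supremum up to `γ x`. -/

namespace Gamma

lemma γmap_mk' (r : ℝ) (e : Bool) : γmap (mk' r e) = max 0 (min 1 r) := by
  unfold mk' γmap; split <;> rfl

lemma γmap_mk'_of_mem {r : ℝ} (h0 : 0 ≤ r) (h1 : r ≤ 1) (e : Bool) : γmap (mk' r e) = r := by
  rw [γmap_mk', min_eq_right h1, max_eq_right h0]

lemma gexact_mk'_false_iff {r : ℝ} (h0 : 0 ≤ r) (h1 : r ≤ 1) : gexact (mk' r false) ↔ r = 0 := by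
  have hc : max 0 (min 1 r) = r := by rw [min_eq_right h1, max_eq_right h0]
  unfold mk' gexact
  split
  next h => simpa [hc] using h
  next h => simpa [hc] using h

lemma γmap_nonneg (x : Gamma) : 0 ≤ γmap x := (gmem x).1

lemma γmap_le_one (x : Gamma) : γmap x ≤ 1 := (gmem x).2.1

lemma γmap_pos_of_not_gexact {x : Gamma} (hx : ¬ gexact x) : 0 < γmap x :=
  (gmem x).2.2.2 (Bool.eq_false_iff.mpr hx)

lemma le_iff_lex (x y : Gamma) : x ≤ y ↔
    γmap x < γmap y ∨ (γmap x = γmap y ∧ (ofLex x.1).2 ≤ (ofLex y.1).2) :=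
  Prod.Lex.le_iff

lemma lt_iff_lex (x y : Gamma) : x < y ↔
    γmap x < γmap y ∨ (γmap x = γmap y ∧ ¬ gexact x ∧ gexact y) := by
  rw [← Subtype.coe_lt_coe, Prod.Lex.lt_iff, Bool.lt_iff]
  simp [γmap, gexact]

lemma lt_of_γmap_lt {x y : Gamma} (h : γmap x < γmap y) : x < y :=
  (lt_iff_lex x y).2 (Or.inl h)

lemma γmap_mono : Monotone γmap := fun x y h => by
  rcases (le_iff_lex x y).1 h with h | h
  · exact h.le
  · exact h.1.le

lemma γmap_gone : γmap gone = 1 := γmap_mk'_of_mem zero_le_one le_rfl true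

lemma γmap_gq {q : ℚ} (h0 : (0 : ℝ) ≤ q) (h1 : (q : ℝ) ≤ 1) : γmap (gq q) = q :=
  γmap_mk'_of_mem h0 h1 true

lemma gexact_gq (q : ℚ) : gexact (gq q) := by
  unfold gq mk' gexact
  rw [dif_pos (Or.inl ⟨rfl, max 0 (min 1 q), by push_cast; rfl⟩)]
  rfl

lemma γmap_gsub {x y : Gamma} (h : γmap y ≤ γmap x) : γmap (gsub x y) = γmap x - γmap y :=
  γmap_mk'_of_mem (by linarith) (by linarith [γmap_le_one x, γmap_nonneg y]) _

lemma γmap_gadd {x y : Gamma} (h : γmap x + γmap y ≤ 1) : γmap (gadd x y) = γmap x + γmap y :=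
  γmap_mk'_of_mem (by linarith [γmap_nonneg x, γmap_nonneg y]) h _

lemma add_le_one_of_le_gsub_gone {x y : Gamma} (hd : x ≤ gsub gone y) :
    γmap x + γmap y ≤ 1 := by
  have := γmap_mono hd
  rw [γmap_gsub (by rw [γmap_gone]; exact γmap_le_one y), γmap_gone] at this
  linarith

lemma gsub_of_not_gexact_of_gexact {x y : Gamma} (hx : ¬ gexact x) (hy : gexact y) :
    gsub x y = iminusR (γmap x - γmap y) := by
  unfold gsub iminusR
  rw [if_neg (by tauto)]

lemma not_gexact_gadd {x y : Gamma} (hy : ¬ gexact y) (h : γmap x + γmap y ≤ 1) :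
    ¬ gexact (gadd x y) := by
  have hpos := γmap_pos_of_not_gexact hy
  unfold gadd
  rw [if_neg (by tauto), gexact_mk'_false_iff (by linarith [γmap_nonneg x]) h]
  linarith [γmap_nonneg x]

lemma γmap_iminusR {a : ℝ} (h0 : 0 ≤ a) (h1 : a ≤ 1) : γmap (iminusR a) = a :=
  γmap_mk'_of_mem h0 h1 false

lemma iminusR_le_iff {a : ℝ} (h0 : 0 ≤ a) (h1 : a ≤ 1) (z : Gamma) :
    iminusR a ≤ z ↔ a ≤ γmap z := by
  refine ⟨fun h => γmap_iminusR h0 h1 ▸ γmap_mono h, fun h => ?_⟩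
  rw [le_iff_lex, γmap_iminusR h0 h1]
  rcases h.lt_or_eq with h | rfl
  · exact Or.inl h
  by_cases hz : gexact z
  · exact Or.inr ⟨rfl, by rw [show (ofLex z.1).2 = true from hz]; exact Bool.le_true _⟩
  · have hne : ¬ gexact (iminusR (γmap z)) := by
      rw [iminusR, gexact_mk'_false_iff h0 h1]
      exact (γmap_pos_of_not_gexact hz).ne'
    exact Or.inr ⟨rfl, by rw [Bool.eq_false_iff.mpr hne]; exact Bool.false_le _⟩

lemma gsub_gadd_gq_le_iminusR {x y : Gamma} (hxy : γmap x + γmap y ≤ 1) {q : ℚ}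
    (hyq : y < gq q) (hqs : gq q ≤ gadd x y) :
    gsub (gadd x y) (gq q) ≤ iminusR (γmap x) := by
  have hq := γmap_mono hqs
  rw [γmap_gadd hxy] at hq
  rcases (lt_iff_lex y (gq q)).1 hyq with hlt | ⟨heq, hy, -⟩
  · refine (lt_of_γmap_lt ?_).le
    rw [γmap_gsub (by rwa [γmap_gadd hxy]), γmap_gadd hxy,
      γmap_iminusR (γmap_nonneg x) (γmap_le_one x)]
    linarith
  · rw [gsub_of_not_gexact_of_gexact (not_gexact_gadd hy hxy) (gexact_gq q), γmap_gadd hxy, ← heq,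
      add_sub_cancel_right]

/-- Every rational strictly between `γ y` and `γ s` contributes `(γ s - q)°` to the set,
so an upper bound of the set lies over `γ s - γ y` by density of `ℚ`. -/
lemma sub_le_γmap_of_mem_upperBounds {s y u : Gamma}
    (hu : u ∈ upperBounds {z | ∃ q : ℚ, z = gsub s (gq q) ∧ y < gq q ∧ gq q ≤ s}) :
    γmap s - γmap y ≤ γmap u := by
  by_contra! hlt
  obtain ⟨q, hyq, hqs⟩ := exists_rat_btwn (show γmap y < γmap s - γmap u by linarith)
  have hu0 := γmap_nonneg u
  have hq : γmap (gq q) = q :=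
    γmap_gq (by linarith [γmap_nonneg y]) (by linarith [γmap_le_one s])
  have hmem := hu ⟨q, rfl, lt_of_γmap_lt (hq ▸ hyq), (lt_of_γmap_lt (by linarith)).le⟩
  have := γmap_mono hmem
  rw [γmap_gsub (by linarith), hq] at this
  linarith

end Gamma

open Gamma

/-- for every `x, y ∈ Γ` for which `x + y` is defined
(i.e. `x ≤ 1° ∸ y`), the second subtraction `(x + y) ∸̃ y`, defined as the
supremum of `{ (x+y) ∸ q° | y < q° ≤ x+y }`, equals `ι⁻(γ(x))`; in particular
`(x + y) ∸̃ y ≤ x`. -/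
theorem stmt_9 (x y : Gamma) (hd : x ≤ gsub gone y) :
    IsLUB {z | ∃ q : ℚ, z = gsub (gadd x y) (gq q) ∧ y < gq q ∧ gq q ≤ gadd x y}
      (iminusR (γmap x)) ∧ iminusR (γmap x) ≤ x := by
  have hxy := add_le_one_of_le_gsub_gone hd
  have hle := iminusR_le_iff (γmap_nonneg x) (γmap_le_one x)
  refine ⟨⟨?_, fun u hu => ?_⟩, (hle x).2 le_rfl⟩
  · rintro z ⟨q, rfl, hyq, hqs⟩
    exact gsub_gadd_gq_le_iminusR hxy hyq hqs
  · have := sub_le_γmap_of_mem_upperBounds hu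
    rw [γmap_gadd hxy, add_sub_cancel_right] at this
    exact (hle u).2 this
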